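/- arXiv:2503.17611 — 2 statements merged into one kernel-verified Lean document; each statement's English description precedes it below -/
import Mathlib

section
/- If f, g : ℕ → ℕ are functions each continuous as a map from the Macías space M(ℕ) to itself, then their pointwise product h(x) := f(x)·g(x) is continuous as a map from M(ℕ) to itself. -/
open Topology

/-- For `n` a positive natural, `σ_n = {m ∈ ℕ⁺ : gcd(n,m) = 1}`. -/
def sigmaSet (n : ℕ+) : Set ℕ+ := {m : ℕ+ | Nat.Coprime (n : ℕ) (m : ℕ)}

/-- The Macías topology `τ_M` on the positive naturals, generated by the sets `σ_n`. -/
def tauM : TopologicalSpace ℕ+ :=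
  TopologicalSpace.generateFrom (Set.range sigmaSet)

lemma sigma_open (n : ℕ+) : IsOpen[tauM] (sigmaSet n) :=
  TopologicalSpace.GenerateOpen.basic _ ⟨n, rfl⟩

theorem mul_fun_continuous (f g : ℕ+ → ℕ+)
    (hfc : Continuous[tauM, tauM] f) (hgc : Continuous[tauM, tauM] g) :
    Continuous[tauM, tauM] (fun x : ℕ+ => f x * g x) := by
  rw [show tauM = TopologicalSpace.generateFrom (Set.range sigmaSet) from rfl,
    continuous_generateFrom_iff]
  rintro _ ⟨n, rfl⟩
  have h1 : (fun x => f x * g x) ⁻¹' sigmaSet n = f ⁻¹' sigmaSet n ∩ g ⁻¹' sigmaSet n := by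
    ext x
    simp only [sigmaSet, Set.mem_preimage, Set.mem_setOf_eq, Set.mem_inter_iff,
      PNat.mul_coe, Nat.coprime_mul_iff_right]
  rw [h1]
  exact @IsOpen.inter ℕ+ tauM _ _
    (@Continuous.isOpen_preimage ℕ+ ℕ+ tauM tauM f hfc _ (sigma_open n))
    (@Continuous.isOpen_preimage ℕ+ ℕ+ tauM tauM g hgc _ (sigma_open n))
end

section
/- For all a ∈ ℕ and n ∈ ℕ ∪ {0}, the function f : ℕ → ℕ given by f(x) = a·x^n is continuous as a map from the Macías space M(ℕ) to itself. -/
open Topology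

/- Since `gcd(k, xy) = 1` iff `gcd(k, x) = 1` and `gcd(k, y) = 1`, the preimage of `σ_k` under
multiplication is the open rectangle `σ_k × σ_k`; so `τ_M` makes `ℕ⁺` a topological monoid, and
`x ↦ a xⁿ` is continuous as a product of a constant and a power. -/

theorem isOpen_sigmaSet (k : ℕ+) : IsOpen[tauM] (sigmaSet k) :=
  TopologicalSpace.GenerateOpen.basic _ ⟨k, rfl⟩

theorem mul_mem_sigmaSet_iff {k x y : ℕ+} :
    x * y ∈ sigmaSet k ↔ x ∈ sigmaSet k ∧ y ∈ sigmaSet k := by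
  simp only [sigmaSet, Set.mem_ofPred_eq, PNat.mul_coe, Nat.coprime_mul_iff_right]

theorem continuousMul_tauM : @ContinuousMul ℕ+ tauM _ := by
  let _ : TopologicalSpace ℕ+ := tauM
  refine ⟨continuous_generateFrom_iff.mpr ?_⟩
  rintro _ ⟨k, rfl⟩
  have hpre : (fun p : ℕ+ × ℕ+ => p.1 * p.2) ⁻¹' sigmaSet k = sigmaSet k ×ˢ sigmaSet k := by
    ext p
    exact mul_mem_sigmaSet_iff
  rw [hpre]
  exact (isOpen_sigmaSet k).prod (isOpen_sigmaSet k)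

theorem monomial_continuous (a : ℕ+) (n : ℕ) :
    Continuous[tauM, tauM] (fun x : ℕ+ => a * x ^ n) := by
  let _ : TopologicalSpace ℕ+ := tauM
  have := continuousMul_tauM
  exact continuous_const.mul (continuous_pow n)
end
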